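/- arXiv:q-alg/9610004 — 2 statements merged into one kernel-verified Lean document; each statement's English description precedes it below -/
import Mathlib

section
/- In the Hopf algebra U (with the coproduct Δ determined by ΔK = K⊗K, ΔL = L⊗L, ΔX± = X± ⊗ K⁻¹ + K ⊗ X±, Δθ± = θ± ⊗ L⁻¹ + L ⊗ θ±), define η₊ := −θ₊L⁻¹ and e := v⁻¹K⁻¹(X₊θ₊ − qθ₊X₊)L⁻¹. Then the coproduct of the composite root vector e is Δe = e ⊗ K⁻²L⁻² + v⁻¹(q − q⁻¹)·η₊ ⊗ X₊K⁻¹L⁻² + 1 ⊗ e. -/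
open scoped TensorProduct

namespace DoubleBos

/-- Generators of the algebra `U`: `K, K⁻¹, L, L⁻¹, X₊, X₋, θ₊, θ₋`. -/
inductive Gen : Type
  | K | Kinv | L | Linv | Xp | Xm | Tp | Tm
  deriving DecidableEq

/-- The generators viewed inside the free algebra. -/
noncomputable abbrev gg (k : Type) [Field k] (x : Gen) : FreeAlgebra k Gen :=
  FreeAlgebra.ι k x

/-- The defining relations of `U` (with `q = v²`, `i² = -1`). -/
inductive Rel (k : Type) [Field k] (v i : k) :
    FreeAlgebra k Gen → FreeAlgebra k Gen → Prop
  | KKinv : Rel k v i (gg k .K * gg k .Kinv) 1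
  | KinvK : Rel k v i (gg k .Kinv * gg k .K) 1
  | LLinv : Rel k v i (gg k .L * gg k .Linv) 1
  | LinvL : Rel k v i (gg k .Linv * gg k .L) 1
  | KL : Rel k v i (gg k .K * gg k .L) (gg k .L * gg k .K)
  | KXp : Rel k v i (gg k .K * gg k .Xp) ((v ^ 2) • (gg k .Xp * gg k .K))
  | KXm : Rel k v i (gg k .K * gg k .Xm) ((v ^ 2)⁻¹ • (gg k .Xm * gg k .K))
  | LXp : Rel k v i (gg k .L * gg k .Xp) (v⁻¹ • (gg k .Xp * gg k .L))
  | LXm : Rel k v i (gg k .L * gg k .Xm) (v • (gg k .Xm * gg k .L))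
  | KTp : Rel k v i (gg k .K * gg k .Tp) (v⁻¹ • (gg k .Tp * gg k .K))
  | KTm : Rel k v i (gg k .K * gg k .Tm) (v • (gg k .Tm * gg k .K))
  | LTp : Rel k v i (gg k .L * gg k .Tp) (i • (gg k .Tp * gg k .L))
  | LTm : Rel k v i (gg k .L * gg k .Tm) ((-i) • (gg k .Tm * gg k .L))
  | XpXm : Rel k v i (gg k .Xp * gg k .Xm - gg k .Xm * gg k .Xp)
      ((v ^ 2 - (v ^ 2)⁻¹)⁻¹ • (gg k .K * gg k .K - gg k .Kinv * gg k .Kinv))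
  | TpTm : Rel k v i (gg k .Tp * gg k .Tm - gg k .Tm * gg k .Tp)
      ((v ^ 2 - (v ^ 2)⁻¹)⁻¹ • (gg k .L * gg k .L - gg k .Linv * gg k .Linv))
  | TpXm : Rel k v i (gg k .Tp * gg k .Xm) (gg k .Xm * gg k .Tp)
  | XpTm : Rel k v i (gg k .Xp * gg k .Tm) (gg k .Tm * gg k .Xp)
  | TpTp : Rel k v i (gg k .Tp * gg k .Tp) 0
  | TmTm : Rel k v i (gg k .Tm * gg k .Tm) 0
  | SerreP : Rel k v i
      ((gg k .Xp * gg k .Tp - (v ^ 2) • (gg k .Tp * gg k .Xp)) * gg k .Xp)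
      ((v ^ 2) • (gg k .Xp * (gg k .Xp * gg k .Tp - (v ^ 2) • (gg k .Tp * gg k .Xp))))
  | SerreM : Rel k v i
      ((gg k .Xm * gg k .Tm - (v ^ 2) • (gg k .Tm * gg k .Xm)) * gg k .Xm)
      ((v ^ 2) • (gg k .Xm * (gg k .Xm * gg k .Tm - (v ^ 2) • (gg k .Tm * gg k .Xm))))

/-- The algebra `U = ℂ_q^{0|2⋆op} ⋊ Ũ_q(su₂) ⋉ ℂ_q^{0|2}`, presented by generators
and relations. -/
abbrev U (k : Type) [Field k] (v i : k) : Type := RingQuot (Rel k v i)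

variable (k : Type) [Field k] (v i : k)

/-- The quotient map from the free algebra onto `U`. -/
noncomputable def mkU : FreeAlgebra k Gen →ₐ[k] U k v i :=
  RingQuot.mkAlgHom k (Rel k v i)

noncomputable def UK : U k v i := mkU k v i (gg k .K)
noncomputable def UKinv : U k v i := mkU k v i (gg k .Kinv)
noncomputable def UL : U k v i := mkU k v i (gg k .L)
noncomputable def ULinv : U k v i := mkU k v i (gg k .Linv)
noncomputable def UXp : U k v i := mkU k v i (gg k .Xp)
noncomputable def UXm : U k v i := mkU k v i (gg k .Xm)
noncomputable def UTp : U k v i := mkU k v i (gg k .Tp)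
noncomputable def UTm : U k v i := mkU k v i (gg k .Tm)

/-- `η₊ = -θ₊ L⁻¹`. -/
noncomputable def etaP : U k v i := -(UTp k v i * ULinv k v i)

/-- `η₋ = L θ₋`. -/
noncomputable def etaM : U k v i := UL k v i * UTm k v i

/-- the composite root vector `e = v⁻¹ K⁻¹ (X₊θ₊ - q θ₊X₊) L⁻¹`. -/
noncomputable def eRoot : U k v i :=
  v⁻¹ • (UKinv k v i * (UXp k v i * UTp k v i - (v ^ 2) • (UTp k v i * UXp k v i)) * ULinv k v i)


/-! Both `Δ X₊` and `Δ θ₊` are sums of two tensors whose factors commute up to scalars, so the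
coproduct of `W = X₊θ₊ - qθ₊X₊` splits into four `q`-commutators of pure tensors. Two of them
reproduce `W`, as `W ⊗ K⁻¹L⁻¹` and `KL ⊗ W`; one vanishes because the scalars `v · v` picked up by
swapping its factors equal `q`; the last one is `(q⁻¹ - q) θ₊K ⊗ L⁻¹X₊`. Conjugating by
`Δ K⁻¹ = K⁻¹ ⊗ K⁻¹` and `Δ L⁻¹ = L⁻¹ ⊗ L⁻¹` turns these into the three terms of `Δ e`. -/

open Algebra.TensorProduct TensorProduct

section QComm

variable {R A B : Type*} [CommRing R] [Ring A] [Algebra R A] [Ring B] [Algebra R B]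

def qComm (c : R) (a b : A) : A := a * b - c • (b * a)

theorem map_qComm {F : Type*} [FunLike F A B] [AlgHomClass F R A B] (f : F) (c : R) (a b : A) :
    f (qComm c a b) = qComm c (f a) (f b) := by
  simp only [qComm, map_sub, map_smul, map_mul]

theorem qComm_add_add (c : R) (a₁ a₂ b₁ b₂ : A) :
    qComm c (a₁ + a₂) (b₁ + b₂) =
      qComm c a₁ b₁ + qComm c a₁ b₂ + qComm c a₂ b₁ + qComm c a₂ b₂ := by
  simp only [qComm, add_mul, mul_add, smul_add]
  abel

theorem mul_inv_eq_smul_of_mul_eq_smul {a b x : A} {c : R} (hba : b * a = 1) (hab : a * b = 1)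
    (h : a * x = c • (x * a)) : x * b = c • (b * x) := by
  calc x * b = b * (a * x) * b := by rw [← mul_assoc, hba, one_mul]
    _ = c • (b * x) := by rw [h, mul_smul_comm, smul_mul_assoc, mul_assoc, mul_assoc, hab, mul_one]

theorem mul_eq_inv_smul_of_mul_eq_smul {F : Type*} [Field F] [Algebra F A] {a b : A} {c : F}
    (hc : c ≠ 0) (h : a * b = c • (b * a)) : b * a = c⁻¹ • (a * b) := by
  rw [h, inv_smul_smul₀ hc]

theorem qComm_tmul_of_commute_right (c : R) (a a' : A) {b b' : B} (hb : Commute b b') :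
    qComm c (a ⊗ₜ[R] b) (a' ⊗ₜ[R] b') = qComm c a a' ⊗ₜ[R] (b * b') := by
  simp only [qComm, tmul_mul_tmul, hb.eq, sub_tmul, smul_tmul']

theorem qComm_tmul_of_commute_left (c : R) {a a' : A} (ha : Commute a a') (b b' : B) :
    qComm c (a ⊗ₜ[R] b) (a' ⊗ₜ[R] b') = (a * a') ⊗ₜ[R] qComm c b b' := by
  simp only [qComm, tmul_mul_tmul, ha.eq, tmul_sub, tmul_smul]

theorem qComm_tmul_of_mul_eq_smul (c : R) {a a' : A} {b b' : B} {s t : R}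
    (ha : a * a' = s • (a' * a)) (hb : b * b' = t • (b' * b)) :
    qComm c (a ⊗ₜ[R] b) (a' ⊗ₜ[R] b') = (s * t - c) • ((a' * a) ⊗ₜ[R] (b' * b)) := by
  simp only [qComm, tmul_mul_tmul, ha, hb, smul_tmul_smul, sub_smul]

end QComm

variable {k v i}

theorem mkU_rel {a b : FreeAlgebra k Gen} (h : Rel k v i a b) : mkU k v i a = mkU k v i b :=
  RingQuot.mkAlgHom_rel k h

theorem UK_mul_UKinv : UK k v i * UKinv k v i = 1 := by
  rw [UK, UKinv, ← map_mul, mkU_rel Rel.KKinv, map_one]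

theorem UKinv_mul_UK : UKinv k v i * UK k v i = 1 := by
  rw [UK, UKinv, ← map_mul, mkU_rel Rel.KinvK, map_one]

theorem UL_mul_ULinv : UL k v i * ULinv k v i = 1 := by
  rw [UL, ULinv, ← map_mul, mkU_rel Rel.LLinv, map_one]

theorem ULinv_mul_UL : ULinv k v i * UL k v i = 1 := by
  rw [UL, ULinv, ← map_mul, mkU_rel Rel.LinvL, map_one]

theorem commute_UK_UL : Commute (UK k v i) (UL k v i) := by
  rw [Commute, SemiconjBy, UK, UL, ← map_mul, mkU_rel Rel.KL, map_mul]

theorem UK_mul_UXp : UK k v i * UXp k v i = (v ^ 2) • (UXp k v i * UK k v i) := by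
  rw [UK, UXp, ← map_mul, mkU_rel Rel.KXp, map_smul, map_mul]

theorem UL_mul_UXp : UL k v i * UXp k v i = v⁻¹ • (UXp k v i * UL k v i) := by
  rw [UL, UXp, ← map_mul, mkU_rel Rel.LXp, map_smul, map_mul]

theorem UK_mul_UTp : UK k v i * UTp k v i = v⁻¹ • (UTp k v i * UK k v i) := by
  rw [UK, UTp, ← map_mul, mkU_rel Rel.KTp, map_smul, map_mul]

theorem UXp_mul_UL (hv : v ≠ 0) : UXp k v i * UL k v i = v • (UL k v i * UXp k v i) := by
  simpa using mul_eq_inv_smul_of_mul_eq_smul (inv_ne_zero hv) UL_mul_UXp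

theorem UXp_mul_UKinv : UXp k v i * UKinv k v i = (v ^ 2) • (UKinv k v i * UXp k v i) :=
  mul_inv_eq_smul_of_mul_eq_smul UKinv_mul_UK UK_mul_UKinv UK_mul_UXp

theorem UXp_mul_ULinv : UXp k v i * ULinv k v i = v⁻¹ • (ULinv k v i * UXp k v i) :=
  mul_inv_eq_smul_of_mul_eq_smul ULinv_mul_UL UL_mul_ULinv UL_mul_UXp

theorem UTp_mul_UKinv : UTp k v i * UKinv k v i = v⁻¹ • (UKinv k v i * UTp k v i) :=
  mul_inv_eq_smul_of_mul_eq_smul UKinv_mul_UK UK_mul_UKinv UK_mul_UTp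

theorem UKinv_mul_UTp (hv : v ≠ 0) : UKinv k v i * UTp k v i = v • (UTp k v i * UKinv k v i) := by
  simpa using mul_eq_inv_smul_of_mul_eq_smul (inv_ne_zero hv) UTp_mul_UKinv

theorem commute_UKinv_ULinv : Commute (UKinv k v i) (ULinv k v i) :=
  let uK : (U k v i)ˣ := ⟨UK k v i, UKinv k v i, UK_mul_UKinv, UKinv_mul_UK⟩
  let uL : (U k v i)ˣ := ⟨UL k v i, ULinv k v i, UL_mul_ULinv, ULinv_mul_UL⟩
  (commute_UK_UL.units_inv_left (u := uK)).units_inv_right (u := uL)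

theorem comul_qComm_UXp_UTp (hv : v ≠ 0) (Δ : U k v i →ₐ[k] U k v i ⊗[k] U k v i)
    (hXp : Δ (UXp k v i) = UXp k v i ⊗ₜ[k] UKinv k v i + UK k v i ⊗ₜ[k] UXp k v i)
    (hTp : Δ (UTp k v i) = UTp k v i ⊗ₜ[k] ULinv k v i + UL k v i ⊗ₜ[k] UTp k v i) :
    Δ (qComm (v ^ 2) (UXp k v i) (UTp k v i)) =
      qComm (v ^ 2) (UXp k v i) (UTp k v i) ⊗ₜ[k] (UKinv k v i * ULinv k v i) +
        ((v ^ 2)⁻¹ - v ^ 2) • ((UTp k v i * UK k v i) ⊗ₜ[k] (ULinv k v i * UXp k v i)) +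
        (UK k v i * UL k v i) ⊗ₜ[k] qComm (v ^ 2) (UXp k v i) (UTp k v i) := by
  rw [map_qComm, hXp, hTp, qComm_add_add,
    qComm_tmul_of_commute_right _ _ _ commute_UKinv_ULinv,
    qComm_tmul_of_mul_eq_smul _ (UXp_mul_UL hv) (UKinv_mul_UTp hv),
    qComm_tmul_of_mul_eq_smul _ UK_mul_UTp UXp_mul_ULinv,
    qComm_tmul_of_commute_left _ commute_UK_UL, ← sq, sub_self, zero_smul, add_zero, ← sq,
    ← inv_pow]

theorem eRoot_eq_smul_qComm :
    eRoot k v i = v⁻¹ • (UKinv k v i * qComm (v ^ 2) (UXp k v i) (UTp k v i) * ULinv k v i) :=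
  rfl

theorem UKinv_mul_UTp_mul_UK_mul_ULinv (hv : v ≠ 0) :
    UKinv k v i * (UTp k v i * UK k v i) * ULinv k v i = v • (UTp k v i * ULinv k v i) := by
  rw [← mul_assoc, UKinv_mul_UTp hv, smul_mul_assoc, smul_mul_assoc, mul_assoc (UTp k v i),
    UKinv_mul_UK, mul_one]

theorem UKinv_mul_ULinv_mul_UXp_mul_ULinv (hv : v ≠ 0) :
    UKinv k v i * (ULinv k v i * UXp k v i) * ULinv k v i =
      v⁻¹ • (UXp k v i * UKinv k v i * ULinv k v i * ULinv k v i) := by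
  rw [UXp_mul_UKinv, smul_mul_assoc, smul_mul_assoc, mul_assoc (UKinv k v i) (UXp k v i),
    UXp_mul_ULinv, mul_smul_comm, smul_mul_assoc, smul_smul, ← mul_assoc, smul_smul,
    show v⁻¹ * v ^ 2 * v⁻¹ = 1 by field_simp, one_smul]

theorem comul_eRoot_general (k : Type) [Field k] (v i : k)
    (hv : v ≠ 0)
    (Δ : U k v i →ₐ[k] U k v i ⊗[k] U k v i)
    (hKinv : Δ (UKinv k v i) = UKinv k v i ⊗ₜ[k] UKinv k v i)
    (hLinv : Δ (ULinv k v i) = ULinv k v i ⊗ₜ[k] ULinv k v i)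
    (hXp : Δ (UXp k v i) = UXp k v i ⊗ₜ[k] UKinv k v i + UK k v i ⊗ₜ[k] UXp k v i)
    (hTp : Δ (UTp k v i) = UTp k v i ⊗ₜ[k] ULinv k v i + UL k v i ⊗ₜ[k] UTp k v i) :
    Δ (eRoot k v i) =
      eRoot k v i ⊗ₜ[k]
          (UKinv k v i * UKinv k v i * ULinv k v i * ULinv k v i) +
        (v⁻¹ * (v ^ 2 - (v ^ 2)⁻¹)) •
          (etaP k v i ⊗ₜ[k]
            (UXp k v i * UKinv k v i * ULinv k v i * ULinv k v i)) +
        1 ⊗ₜ[k] eRoot k v i := by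
  have hKL : UKinv k v i * (UK k v i * UL k v i) * ULinv k v i = 1 := by
    rw [← mul_assoc, UKinv_mul_UK, one_mul, UL_mul_ULinv]
  rw [eRoot_eq_smul_qComm, map_smul, map_mul, map_mul, hKinv, hLinv,
    comul_qComm_UXp_UTp hv Δ hXp hTp]
  simp only [mul_add, add_mul, tmul_mul_tmul, mul_smul_comm, smul_mul_assoc]
  rw [UKinv_mul_UTp_mul_UK_mul_ULinv hv, UKinv_mul_ULinv_mul_UXp_mul_ULinv hv, hKL,
    ← mul_assoc (UKinv k v i) (UKinv k v i), etaP, ← neg_one_smul k (UTp k v i * ULinv k v i)]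
  simp only [smul_add, smul_smul, tmul_smul, ← smul_tmul']
  match_scalars
  · rfl
  · rw [inv_mul_cancel₀ hv]
    ring
  · rfl

/-- in the Hopf algebra `U`, with coproduct `Δ` determined by its
stated values on the generators, the coproduct of the composite root vector
`e = v⁻¹K⁻¹(X₊θ₊ - qθ₊X₊)L⁻¹` is
`Δe = e ⊗ K⁻²L⁻² + v⁻¹(q - q⁻¹)·η₊ ⊗ X₊K⁻¹L⁻² + 1 ⊗ e`. -/
theorem comul_eRoot (k : Type) [Field k] (v i : k)
    (hv : v ≠ 0) (hq : v ^ 2 - (v ^ 2)⁻¹ ≠ 0) (hq2 : (v ^ 2) ^ 2 + 1 ≠ 0)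
    (hi : i ^ 2 = -1)
    (Δ : U k v i →ₐ[k] U k v i ⊗[k] U k v i)
    (hK : Δ (UK k v i) = UK k v i ⊗ₜ[k] UK k v i)
    (hKinv : Δ (UKinv k v i) = UKinv k v i ⊗ₜ[k] UKinv k v i)
    (hL : Δ (UL k v i) = UL k v i ⊗ₜ[k] UL k v i)
    (hLinv : Δ (ULinv k v i) = ULinv k v i ⊗ₜ[k] ULinv k v i)
    (hXp : Δ (UXp k v i) = UXp k v i ⊗ₜ[k] UKinv k v i + UK k v i ⊗ₜ[k] UXp k v i)
    (hXm : Δ (UXm k v i) = UXm k v i ⊗ₜ[k] UKinv k v i + UK k v i ⊗ₜ[k] UXm k v i)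
    (hTp : Δ (UTp k v i) = UTp k v i ⊗ₜ[k] ULinv k v i + UL k v i ⊗ₜ[k] UTp k v i)
    (hTm : Δ (UTm k v i) = UTm k v i ⊗ₜ[k] ULinv k v i + UL k v i ⊗ₜ[k] UTm k v i) :
    Δ (eRoot k v i) =
      eRoot k v i ⊗ₜ[k]
          (UKinv k v i * UKinv k v i * ULinv k v i * ULinv k v i) +
        (v⁻¹ * (v ^ 2 - (v ^ 2)⁻¹)) •
          (etaP k v i ⊗ₜ[k]
            (UXp k v i * UKinv k v i * ULinv k v i * ULinv k v i)) +
        1 ⊗ₜ[k] eRoot k v i :=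
  comul_eRoot_general k v i hv Δ hKinv hLinv hXp hTp

end DoubleBos
end

section
/- The Hopf algebra U(β) has a triangular decomposition: the set of elements f_{i₁}f_{i₂}⋯f_{i_r} · K₁^{a₁}⋯K_n^{a_n} K̃₁^{b₁}⋯K̃_n^{b_n} · e_{j₁}e_{j₂}⋯e_{j_s}, where r, s ∈ ℕ, (i₁,…,i_r) and (j₁,…,j_s) range over all finite words in {1,…,n}, and a₁,…,a_n, b₁,…,b_n ∈ ℤ, is a basis of U(β) as a k-vector space. Equivalently, the multiplication map from (free algebra on f₁,…,f_n) ⊗ (Laurent polynomial-type group algebra on K_i^{±1}, K̃_i^{±1}) ⊗ (free algebra on e₁,…,e_n) to U(β) is a linear isomorphism. -/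
open scoped TensorProduct

namespace FreeDoubleBos

/-- Generators of `U(β)`: the toral generators `K_i^{±1}, K̃_i^{±1}` and the
root generators `e_i, f_i`. `tor i ff b` is `K_i` (`b = ff`) or `K_i⁻¹`
(`b = tt`); `tor i tt b` is `K̃_i` or `K̃_i⁻¹`. -/
inductive Gen (n : ℕ) : Type
  | tor (i : Fin n) (tilde : Bool) (inv : Bool)
  | e (i : Fin n)
  | f (i : Fin n)
  deriving DecidableEq

noncomputable abbrev gg (k : Type) [Field k] {n : ℕ} (x : Gen n) :
    FreeAlgebra k (Gen n) := FreeAlgebra.ι k x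

/-- The defining relations of the double-bosonisation
`k⟨f⟩ ⋊ U_q(β) ⋉ k⟨e⟩`: the `K_i, K̃_i` are invertible and mutually commute,
`e_i K_j = q^{β_{ji}} K_j e_i`, `e_i K̃_j = q^{β_{ij}} K̃_j e_i`,
`f_i K_j = q^{-β_{ji}} K_j f_i`, `f_i K̃_j = q^{-β_{ij}} K̃_j f_i`, and
`[e_i, f_j] = δ_{ij}(K_i - K̃_i⁻¹)/(q_i - q_i⁻¹)`; there are no relations among
the `e_i` alone nor among the `f_i` alone. -/
inductive Rel (k : Type) [Field k] (n : ℕ) (β : Matrix (Fin n) (Fin n) ℤ)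
    (q : k) (qi : Fin n → k) :
    FreeAlgebra k (Gen n) → FreeAlgebra k (Gen n) → Prop
  | torInv (i : Fin n) (t : Bool) :
      Rel k n β q qi (gg k (.tor i t false) * gg k (.tor i t true)) 1
  | invTor (i : Fin n) (t : Bool) :
      Rel k n β q qi (gg k (.tor i t true) * gg k (.tor i t false)) 1
  | torComm (i j : Fin n) (t t' : Bool) (b b' : Bool) :
      Rel k n β q qi (gg k (.tor i t b) * gg k (.tor j t' b'))
        (gg k (.tor j t' b') * gg k (.tor i t b))
  | eK (i j : Fin n) :
      Rel k n β q qi (gg k (.e i) * gg k (.tor j false false))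
        ((q ^ (β j i)) • (gg k (.tor j false false) * gg k (.e i)))
  | eKt (i j : Fin n) :
      Rel k n β q qi (gg k (.e i) * gg k (.tor j true false))
        ((q ^ (β i j)) • (gg k (.tor j true false) * gg k (.e i)))
  | fK (i j : Fin n) :
      Rel k n β q qi (gg k (.f i) * gg k (.tor j false false))
        ((q ^ (-β j i)) • (gg k (.tor j false false) * gg k (.f i)))
  | fKt (i j : Fin n) :
      Rel k n β q qi (gg k (.f i) * gg k (.tor j true false))
        ((q ^ (-β i j)) • (gg k (.tor j true false) * gg k (.f i)))
  | ef_ne (i j : Fin n) (h : i ≠ j) :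
      Rel k n β q qi (gg k (.e i) * gg k (.f j)) (gg k (.f j) * gg k (.e i))
  | ef_eq (i : Fin n) :
      Rel k n β q qi (gg k (.e i) * gg k (.f i) - gg k (.f i) * gg k (.e i))
        ((qi i - (qi i)⁻¹)⁻¹ •
          (gg k (.tor i false false) - gg k (.tor i true true)))

/-- The algebra `U(β)`. -/
abbrev Ub (k : Type) [Field k] (n : ℕ) (β : Matrix (Fin n) (Fin n) ℤ)
    (q : k) (qi : Fin n → k) : Type := RingQuot (Rel k n β q qi)

variable (k : Type) [Field k] (n : ℕ) (β : Matrix (Fin n) (Fin n) ℤ)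
  (q : k) (qi : Fin n → k)

noncomputable def mkUb : FreeAlgebra k (Gen n) →ₐ[k] Ub k n β q qi :=
  RingQuot.mkAlgHom k (Rel k n β q qi)

noncomputable def Kg (i : Fin n) : Ub k n β q qi := mkUb k n β q qi (gg k (.tor i false false))
noncomputable def Kginv (i : Fin n) : Ub k n β q qi := mkUb k n β q qi (gg k (.tor i false true))
noncomputable def Ktg (i : Fin n) : Ub k n β q qi := mkUb k n β q qi (gg k (.tor i true false))
noncomputable def Ktginv (i : Fin n) : Ub k n β q qi := mkUb k n β q qi (gg k (.tor i true true))
noncomputable def eg (i : Fin n) : Ub k n β q qi := mkUb k n β q qi (gg k (.e i))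
noncomputable def fg (i : Fin n) : Ub k n β q qi := mkUb k n β q qi (gg k (.f i))


/-- `K_i` as a unit of `U(β)`. -/
noncomputable def uK (i : Fin n) : (Ub k n β q qi)ˣ where
  val := Kg k n β q qi i
  inv := Kginv k n β q qi i
  val_inv := by
    have h := RingQuot.mkAlgHom_rel k
      (Rel.torInv (k := k) (n := n) (β := β) (q := q) (qi := qi) i false)
    simpa [Kg, Kginv, mkUb, map_mul, map_one] using h
  inv_val := by
    have h := RingQuot.mkAlgHom_rel k
      (Rel.invTor (k := k) (n := n) (β := β) (q := q) (qi := qi) i false)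
    simpa [Kg, Kginv, mkUb, map_mul, map_one] using h

/-- `K̃_i` as a unit of `U(β)`. -/
noncomputable def uKt (i : Fin n) : (Ub k n β q qi)ˣ where
  val := Ktg k n β q qi i
  inv := Ktginv k n β q qi i
  val_inv := by
    have h := RingQuot.mkAlgHom_rel k
      (Rel.torInv (k := k) (n := n) (β := β) (q := q) (qi := qi) i true)
    simpa [Ktg, Ktginv, mkUb, map_mul, map_one] using h
  inv_val := by
    have h := RingQuot.mkAlgHom_rel k
      (Rel.invTor (k := k) (n := n) (β := β) (q := q) (qi := qi) i true)
    simpa [Ktg, Ktginv, mkUb, map_mul, map_one] using h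

/-- The monomial `f_{i₁}⋯f_{i_r} · K₁^{a₁}⋯K_n^{a_n} K̃₁^{b₁}⋯K̃_n^{b_n} ·
e_{j₁}⋯e_{j_s}`. -/
noncomputable def mono
    (t : List (Fin n) × (Fin n → ℤ) × (Fin n → ℤ) × List (Fin n)) :
    Ub k n β q qi :=
  (t.1.map (fg k n β q qi)).prod *
    ((List.finRange n).map (fun i =>
      (((uK k n β q qi i) ^ (t.2.1 i) : (Ub k n β q qi)ˣ) : Ub k n β q qi))).prod *
    ((List.finRange n).map (fun i =>
      (((uKt k n β q qi i) ^ (t.2.2.1 i) : (Ub k n β q qi)ˣ) : Ub k n β q qi))).prod *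
    (t.2.2.2.map (eg k n β q qi)).prod

/-! ### A representation of `U(β)` used to prove linear independence -/

abbrev Idx (n : ℕ) : Type := List (Fin n) × (Fin n → ℤ) × (Fin n → ℤ) × List (Fin n)

abbrev V (k : Type) [Field k] (n : ℕ) : Type := Idx n →₀ k

def sgn (v : Bool) : ℤ := if v then -1 else 1

def sK (j : Fin n) (F : List (Fin n)) : ℤ := (F.map fun i => β j i).sum

def sKt (j : Fin n) (F : List (Fin n)) : ℤ := (F.map fun i => β i j).sum

def tExp (j : Fin n) (t v : Bool) (F : List (Fin n)) : ℤ :=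
  sgn v * (if t then sKt n β j F else sK n β j F)

def eShift (i j : Fin n) (t v : Bool) : ℤ := sgn v * (if t then β i j else β j i)

def tIdx (j : Fin n) (t v : Bool) (x : Idx n) : Idx n :=
  (x.1, x.2.1 + (if t then 0 else Pi.single j (sgn v)),
    x.2.2.1 + (if t then Pi.single j (sgn v) else 0), x.2.2.2)

def sE (i : Fin n) (a b : Fin n → ℤ) : ℤ := (∑ j, a j * β j i) + (∑ j, b j * β i j)

lemma sE_shift (i j : Fin n) (z z' : ℤ) (a b : Fin n → ℤ) :
    sE n β i (a + Pi.single j z) (b + Pi.single j z') =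
      sE n β i a b + z * β j i + z' * β i j := by
  classical
  simp only [sE, Pi.add_apply, add_mul, Finset.sum_add_distrib, Pi.single_apply, ite_mul,
    zero_mul, Finset.sum_ite_eq', Finset.mem_univ, if_true]
  ring

noncomputable def liftV (f : Idx n → V k n) : V k n →ₗ[k] V k n :=
  Finsupp.lift (V k n) k (Idx n) f

lemma liftV_single (f : Idx n → V k n) (x : Idx n) (r : k) :
    liftV k n f (Finsupp.single x r) = r • f x := by
  classical
  simp [liftV, Finsupp.lift_apply, Finsupp.sum_single_index]

noncomputable def opF (i : Fin n) : V k n →ₗ[k] V k n :=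
  liftV k n fun x => Finsupp.single (i :: x.1, x.2) 1

noncomputable def opT (j : Fin n) (t v : Bool) : V k n →ₗ[k] V k n :=
  liftV k n fun x => Finsupp.single (tIdx n j t v x) (q ^ tExp n β j t v x.1)

lemma opF_single (i : Fin n) (x : Idx n) (r : k) :
    opF k n i (Finsupp.single x r) = Finsupp.single (i :: x.1, x.2) r := by
  simp [opF, liftV_single, Finsupp.smul_single]

lemma opT_single (j : Fin n) (t v : Bool) (x : Idx n) (r : k) :
    opT k n β q j t v (Finsupp.single x r) =
      Finsupp.single (tIdx n j t v x) (r * q ^ tExp n β j t v x.1) := by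
  simp [opT, liftV_single, Finsupp.smul_single, smul_eq_mul]

lemma tIdx_fst (j : Fin n) (t v : Bool) (x : Idx n) : (tIdx n j t v x).1 = x.1 := rfl

lemma tIdx_tIdx (j j' : Fin n) (t v t' v' : Bool) (x : Idx n) :
    tIdx n j t v (tIdx n j' t' v' x) = tIdx n j' t' v' (tIdx n j t v x) := by
  simp [tIdx, add_right_comm]

lemma sgn_not (v : Bool) : sgn (!v) = - sgn v := by cases v <;> simp [sgn]

lemma tIdx_inv (j : Fin n) (t v : Bool) (x : Idx n) :
    tIdx n j t (!v) (tIdx n j t v x) = x := by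
  have h : Pi.single j (sgn v) + Pi.single j (sgn (!v)) = (0 : Fin n → ℤ) := by
    rw [sgn_not, ← Pi.single_add]; simp
  cases t <;>
    simp [tIdx, add_assoc, h]

lemma tExp_not (j : Fin n) (t v : Bool) (F : List (Fin n)) :
    tExp n β j t (!v) F = - tExp n β j t v F := by
  cases t <;> simp [tExp, sgn_not]

lemma tExp_cons (j m : Fin n) (t v : Bool) (F : List (Fin n)) :
    tExp n β j t v (m :: F) = eShift n β m j t v + tExp n β j t v F := by
  cases t <;> simp [tExp, eShift, sK, sKt, mul_add]

lemma opT_opF (hq : q ≠ 0) (j m : Fin n) (t v : Bool) (x : Idx n) (r : k) :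
    opT k n β q j t v (opF k n m (Finsupp.single x r)) =
      q ^ eShift n β m j t v •
        opF k n m (opT k n β q j t v (Finsupp.single x r)) := by
  obtain ⟨F, a, b, E⟩ := x
  simp only [opF_single, opT_single, Finsupp.smul_single]
  have : tIdx n j t v (m :: F, a, b, E) = (m :: (tIdx n j t v (F,a,b,E)).1,
      (tIdx n j t v (F,a,b,E)).2) := by
    simp [tIdx]
  rw [this, tExp_cons]
  congr 1
  rw [zpow_add₀ hq, smul_eq_mul]; ring

lemma opT_opT (j j' : Fin n) (t v t' v' : Bool) (x : Idx n) (r : k) :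
    opT k n β q j t v (opT k n β q j' t' v' (Finsupp.single x r)) =
      opT k n β q j' t' v' (opT k n β q j t v (Finsupp.single x r)) := by
  simp only [opT_single, tIdx_fst, tIdx_tIdx]
  ring_nf

lemma opT_inv (hq : q ≠ 0) (j : Fin n) (t v : Bool) (x : Idx n) (r : k) :
    opT k n β q j t (!v) (opT k n β q j t v (Finsupp.single x r)) =
      Finsupp.single x r := by
  simp only [opT_single, tIdx_fst, tIdx_inv, tExp_not, mul_assoc]
  rw [← zpow_add₀ hq]
  simp

noncomputable def cst (i : Fin n) : k := (qi i - (qi i)⁻¹)⁻¹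

noncomputable def eFun (i : Fin n) :
    List (Fin n) → (Fin n → ℤ) → (Fin n → ℤ) → List (Fin n) → V k n
  | [], a, b, E => Finsupp.single ([], a, b, i :: E) (q ^ sE n β i a b)
  | m :: F, a, b, E =>
      opF k n m (eFun i F a b E) +
        (if i = m then
          cst k n qi i •
            (opT k n β q i false false (Finsupp.single (F, a, b, E) 1) -
              opT k n β q i true true (Finsupp.single (F, a, b, E) 1))
        else 0)

lemma single_congr {x y : Idx n} {s t : k} (h1 : x = y) (h2 : s = t) :
    (Finsupp.single x s : V k n) = Finsupp.single y t := by rw [h1, h2]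

lemma opT_opF_comp (hq : q ≠ 0) (j m : Fin n) (t v : Bool) :
    opT k n β q j t v ∘ₗ opF k n m =
      q ^ eShift n β m j t v • (opF k n m ∘ₗ opT k n β q j t v) := by
  apply Finsupp.lhom_ext
  intro x r
  simpa using opT_opF k n β q hq j m t v x r

lemma opT_eFun (hq : q ≠ 0) (i j : Fin n) (t v : Bool) (F : List (Fin n))
    (a b : Fin n → ℤ) (E : List (Fin n)) :
    opT k n β q j t v (eFun k n β q qi i F a b E) =
      q ^ (tExp n β j t v F - eShift n β i j t v) •
        eFun k n β q qi i F (a + (if t then 0 else Pi.single j (sgn v)))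
          (b + (if t then Pi.single j (sgn v) else 0)) E := by
  induction F with
  | nil =>
      have hsE : sE n β i (a + (if t then 0 else Pi.single j (sgn v)))
          (b + (if t then Pi.single j (sgn v) else 0)) =
            sE n β i a b + eShift n β i j t v := by
        cases t
        · simpa [eShift] using sE_shift n β i j (sgn v) 0 a b
        · simpa [eShift] using sE_shift n β i j 0 (sgn v) a b
      rw [eFun, eFun, opT_single]
      have hidx : tIdx n j t v (([] : List (Fin n)), a, b, i :: E) =
          (([] : List (Fin n)), a + (if t then 0 else Pi.single j (sgn v)),
            b + (if t then Pi.single j (sgn v) else 0), i :: E) := rfl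
      rw [hidx, hsE, Finsupp.smul_single]
      congr 1
      have h0 : tExp n β j t v ([] : List (Fin n)) = 0 := by
        cases t <;> simp [tExp, sK, sKt]
      rw [h0, zpow_zero, mul_one, smul_eq_mul, ← zpow_add₀ hq]
      congr 1
      ring
  | cons m F ih =>
      rw [eFun, eFun, map_add, smul_add]
      congr 1
      · have h1 := LinearMap.congr_fun (opT_opF_comp k n β q hq j m t v)
          (eFun k n β q qi i F a b E)
        simp only [LinearMap.comp_apply, LinearMap.smul_apply] at h1
        rw [h1, ih, map_smul, smul_smul, ← zpow_add₀ hq, tExp_cons]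
        congr 1
        ring
      · by_cases h : i = m
        · subst h
          have hexp : tExp n β j t v (i :: F) - eShift n β i j t v =
              tExp n β j t v F := by
            rw [tExp_cons]; ring
          simp only [eq_self_iff_true, if_true, map_smul, map_sub, opT_single, one_mul,
            Finsupp.smul_single, smul_sub, smul_eq_mul, hexp, tIdx]
          simp only [Bool.false_eq_true, if_false, add_zero]
          congr 1 <;>
          · apply single_congr k n
            · simp only [Prod.mk.injEq, eq_self_iff_true, and_true, true_and]
              try constructor
              all_goals abel
            · ring
        · simp [h]

noncomputable def opE (i : Fin n) : V k n →ₗ[k] V k n :=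
  liftV k n fun x => eFun k n β q qi i x.1 x.2.1 x.2.2.1 x.2.2.2

lemma opE_single (i : Fin n) (x : Idx n) (r : k) :
    opE k n β q qi i (Finsupp.single x r) =
      r • eFun k n β q qi i x.1 x.2.1 x.2.2.1 x.2.2.2 :=
  liftV_single k n _ x r

noncomputable def genOp : Gen n → Module.End k (V k n)
  | .tor j t v => opT k n β q j t v
  | .e i => opE k n β q qi i
  | .f i => opF k n i

noncomputable def rep : FreeAlgebra k (Gen n) →ₐ[k] Module.End k (V k n) :=
  FreeAlgebra.lift k (genOp k n β q qi)

lemma rep_gg (x : Gen n) : rep k n β q qi (gg k x) = genOp k n β q qi x :=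
  FreeAlgebra.lift_ι_apply _ _

lemma rep_rel (hq : q ≠ 0) : ∀ ⦃x y⦄, Rel k n β q qi x y →
    rep k n β q qi x = rep k n β q qi y := by
  intro x y h
  cases h with
  | torInv i t =>
      simp only [map_mul, map_one, rep_gg, genOp]
      apply Finsupp.lhom_ext
      intro x r
      simpa [Module.End.mul_apply] using opT_inv k n β q hq i t true x r
  | invTor i t =>
      simp only [map_mul, map_one, rep_gg, genOp]
      apply Finsupp.lhom_ext
      intro x r
      simpa [Module.End.mul_apply] using opT_inv k n β q hq i t false x r
  | torComm i j t t' v v' =>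
      simp only [map_mul, rep_gg, genOp]
      apply Finsupp.lhom_ext
      intro x r
      simpa [Module.End.mul_apply] using opT_opT k n β q i j t v t' v' x r
  | eK i j =>
      simp only [map_mul, map_smul, rep_gg, genOp]
      apply Finsupp.lhom_ext
      intro x r
      obtain ⟨F, a, b, E⟩ := x
      simp only [Module.End.mul_apply, LinearMap.smul_apply, opT_single, opE_single,
        map_smul, opT_eFun k n β q qi hq]
      simp only [tIdx, eShift, sgn, tExp, Bool.false_eq_true, if_false, add_zero, smul_smul]
      congr 1
      conv_lhs => rw [show (1:ℤ) * sK n β j F =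
        β j i + (1 * sK n β j F - 1 * β j i) by ring, zpow_add₀ hq]
      ring
  | eKt i j =>
      simp only [map_mul, map_smul, rep_gg, genOp]
      apply Finsupp.lhom_ext
      intro x r
      obtain ⟨F, a, b, E⟩ := x
      simp only [Module.End.mul_apply, LinearMap.smul_apply, opT_single, opE_single,
        map_smul, opT_eFun k n β q qi hq]
      simp only [tIdx, eShift, sgn, tExp, Bool.false_eq_true, if_false, if_true, add_zero,
        smul_smul]
      congr 1
      conv_lhs => rw [show (1:ℤ) * sKt n β j F =
        β i j + (1 * sKt n β j F - 1 * β i j) by ring, zpow_add₀ hq]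
      ring
  | fK i j =>
      simp only [map_mul, map_smul, rep_gg, genOp]
      apply Finsupp.lhom_ext
      intro x r
      have h := opT_opF k n β q hq j i false false x r
      simp only [Module.End.mul_apply, LinearMap.smul_apply, h, smul_smul, eShift, sgn]
      rw [← zpow_add₀ hq]
      simp
  | fKt i j =>
      simp only [map_mul, map_smul, rep_gg, genOp]
      apply Finsupp.lhom_ext
      intro x r
      have h := opT_opF k n β q hq j i true false x r
      simp only [Module.End.mul_apply, LinearMap.smul_apply, h, smul_smul, eShift, sgn]
      rw [← zpow_add₀ hq]
      simp
  | ef_ne i j hij =>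
      simp only [map_mul, rep_gg, genOp]
      apply Finsupp.lhom_ext
      intro x r
      obtain ⟨F, a, b, E⟩ := x
      simp only [Module.End.mul_apply, opF_single, opE_single, eFun, if_neg hij, add_zero,
        map_smul]
  | ef_eq i =>
      simp only [map_mul, map_sub, map_smul, rep_gg, genOp]
      apply Finsupp.lhom_ext
      intro x r
      obtain ⟨F, a, b, E⟩ := x
      have hs : (Finsupp.single (F, a, b, E) r : V k n) =
          r • Finsupp.single (F, a, b, E) 1 := by
        rw [Finsupp.smul_single, smul_eq_mul, mul_one]
      simp only [Module.End.mul_apply, LinearMap.sub_apply, LinearMap.smul_apply,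
        opF_single, opE_single, eFun, eq_self_iff_true, if_true, map_smul, smul_add, map_add]
      rw [hs]
      simp only [map_smul, eq_self_iff_true, if_true, cst, smul_sub, smul_smul]
      rw [mul_comm r ((qi i - (qi i)⁻¹)⁻¹)]
      abel

lemma tExp_nil (j : Fin n) (t v : Bool) : tExp n β j t v [] = 0 := by
  cases t <;> simp [tExp, sK, sKt]

noncomputable def repU (hq : q ≠ 0) : Ub k n β q qi →ₐ[k] Module.End k (V k n) :=
  RingQuot.liftAlgHom k ⟨rep k n β q qi, rep_rel k n β q qi hq⟩

lemma repU_mk (hq : q ≠ 0) (x : FreeAlgebra k (Gen n)) :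
    repU k n β q qi hq (mkUb k n β q qi x) = rep k n β q qi x :=
  RingQuot.liftAlgHom_mkAlgHom_apply k _ _ x

lemma repU_fg (hq : q ≠ 0) (i : Fin n) :
    repU k n β q qi hq (fg k n β q qi i) = opF k n i := by
  rw [fg, repU_mk, rep_gg]; rfl

lemma repU_eg (hq : q ≠ 0) (i : Fin n) :
    repU k n β q qi hq (eg k n β q qi i) = opE k n β q qi i := by
  rw [eg, repU_mk, rep_gg]; rfl

lemma end_unit_zpow {M : Type} [AddCommGroup M] [Module k M]
    (W : (Module.End k M)ˣ) (φ : ℤ → M)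
    (h1 : ∀ z, W.val (φ z) = φ (z + 1)) (h2 : ∀ z, W.inv (φ z) = φ (z - 1)) :
    ∀ z : ℤ, ((W ^ z : (Module.End k M)ˣ) : Module.End k M) (φ 0) = φ z := by
  intro z
  induction z using Int.induction_on with
  | zero => simp
  | succ m ih =>
      rw [show ((m : ℤ) + 1) = 1 + m by ring, zpow_add, zpow_one, Units.val_mul,
        Module.End.mul_apply, ih, h1]
      congr 1
      ring
  | pred m ih =>
      rw [show (-(m : ℤ) - 1) = -1 + -m by ring, zpow_add, zpow_neg_one, Units.val_mul,
        Module.End.mul_apply, ih]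
      rw [show W⁻¹.val = W.inv from rfl, h2]
      congr 1
      ring

lemma repU_uK_zpow (hq : q ≠ 0) (j : Fin n) (z : ℤ) (a b : Fin n → ℤ)
    (E : List (Fin n)) (r : k) :
    repU k n β q qi hq ((uK k n β q qi j ^ z : (Ub k n β q qi)ˣ) : Ub k n β q qi)
        (Finsupp.single (([] : List (Fin n)), a, b, E) r) =
      Finsupp.single (([] : List (Fin n)), a + Pi.single j z, b, E) r := by
  set f := (repU k n β q qi hq).toRingHom.toMonoidHom with hf
  have hcoe : repU k n β q qi hq ((uK k n β q qi j ^ z : (Ub k n β q qi)ˣ) : Ub k n β q qi)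
      = ((Units.map f (uK k n β q qi j) ^ z : (Module.End k (V k n))ˣ) :
          Module.End k (V k n)) := by
    rw [← map_zpow, Units.coe_map]; rfl
  rw [hcoe]
  have key := end_unit_zpow k (Units.map f (uK k n β q qi j))
    (fun z => Finsupp.single (([] : List (Fin n)), a + Pi.single j z, b, E) r) ?h1 ?h2 z
  · simpa using key
  case h1 =>
    intro w
    have hval : (Units.map f (uK k n β q qi j)).val = opT k n β q j false false := by
      rw [Units.coe_map]
      show repU k n β q qi hq (Kg k n β q qi j) = _
      rw [Kg, repU_mk, rep_gg]; rfl
    rw [hval, opT_single, tExp_nil, zpow_zero, mul_one]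
    have hidx : tIdx n j false false (([] : List (Fin n)), a + Pi.single j w, b, E) =
        (([] : List (Fin n)), a + Pi.single j (w + 1), b, E) := by
      simp [tIdx, sgn, add_assoc, ← Pi.single_add]
    rw [hidx]
  case h2 =>
    intro w
    have hval : (Units.map f (uK k n β q qi j)).inv = opT k n β q j false true := by
      show repU k n β q qi hq (Kginv k n β q qi j) = _
      rw [Kginv, repU_mk, rep_gg]; rfl
    rw [hval, opT_single, tExp_nil, zpow_zero, mul_one]
    have hidx : tIdx n j false true (([] : List (Fin n)), a + Pi.single j w, b, E) =
        (([] : List (Fin n)), a + Pi.single j (w - 1), b, E) := by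
      simp [tIdx, sgn, add_assoc, ← Pi.single_add, sub_eq_add_neg]
    rw [hidx]

lemma repU_uKt_zpow (hq : q ≠ 0) (j : Fin n) (z : ℤ) (a b : Fin n → ℤ)
    (E : List (Fin n)) (r : k) :
    repU k n β q qi hq ((uKt k n β q qi j ^ z : (Ub k n β q qi)ˣ) : Ub k n β q qi)
        (Finsupp.single (([] : List (Fin n)), a, b, E) r) =
      Finsupp.single (([] : List (Fin n)), a, b + Pi.single j z, E) r := by
  set f := (repU k n β q qi hq).toRingHom.toMonoidHom with hf
  have hcoe : repU k n β q qi hq ((uKt k n β q qi j ^ z : (Ub k n β q qi)ˣ) : Ub k n β q qi)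
      = ((Units.map f (uKt k n β q qi j) ^ z : (Module.End k (V k n))ˣ) :
          Module.End k (V k n)) := by
    rw [← map_zpow, Units.coe_map]; rfl
  rw [hcoe]
  have key := end_unit_zpow k (Units.map f (uKt k n β q qi j))
    (fun z => Finsupp.single (([] : List (Fin n)), a, b + Pi.single j z, E) r) ?h1 ?h2 z
  · simpa using key
  case h1 =>
    intro w
    have hval : (Units.map f (uKt k n β q qi j)).val = opT k n β q j true false := by
      rw [Units.coe_map]
      show repU k n β q qi hq (Ktg k n β q qi j) = _
      rw [Ktg, repU_mk, rep_gg]; rfl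
    rw [hval, opT_single, tExp_nil, zpow_zero, mul_one]
    have hidx : tIdx n j true false (([] : List (Fin n)), a, b + Pi.single j w, E) =
        (([] : List (Fin n)), a, b + Pi.single j (w + 1), E) := by
      simp [tIdx, sgn, add_assoc, ← Pi.single_add]
    rw [hidx]
  case h2 =>
    intro w
    have hval : (Units.map f (uKt k n β q qi j)).inv = opT k n β q j true true := by
      show repU k n β q qi hq (Ktginv k n β q qi j) = _
      rw [Ktginv, repU_mk, rep_gg]; rfl
    rw [hval, opT_single, tExp_nil, zpow_zero, mul_one]
    have hidx : tIdx n j true true (([] : List (Fin n)), a, b + Pi.single j w, E) =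
        (([] : List (Fin n)), a, b + Pi.single j (w - 1), E) := by
      simp [tIdx, sgn, add_assoc, ← Pi.single_add, sub_eq_add_neg]
    rw [hidx]

lemma sum_pi_single (c : Fin n → ℤ) :
    ((List.finRange n).map fun j => Pi.single j (c j)).sum = c := by
  rw [← Fin.sum_univ_def]
  exact Finset.univ_sum_single c

lemma repU_Kprod (hq : q ≠ 0) (aexp : Fin n → ℤ) :
    ∀ (l : List (Fin n)) (a b : Fin n → ℤ) (E : List (Fin n)) (r : k),
      repU k n β q qi hq
          ((l.map fun j => ((uK k n β q qi j ^ aexp j : (Ub k n β q qi)ˣ) :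
            Ub k n β q qi)).prod)
          (Finsupp.single (([] : List (Fin n)), a, b, E) r) =
        Finsupp.single
          (([] : List (Fin n)), a + (l.map fun j => Pi.single j (aexp j)).sum, b, E) r := by
  intro l
  induction l with
  | nil => intro a b E r; simp
  | cons j l ih =>
      intro a b E r
      rw [List.map_cons, List.prod_cons, map_mul, Module.End.mul_apply, ih,
        repU_uK_zpow k n β q qi hq]
      congr 2
      simp only [List.map_cons, List.sum_cons]
      refine congrArg (fun x => (x, b, E)) ?_
      abel

lemma repU_Ktprod (hq : q ≠ 0) (bexp : Fin n → ℤ) :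
    ∀ (l : List (Fin n)) (a b : Fin n → ℤ) (E : List (Fin n)) (r : k),
      repU k n β q qi hq
          ((l.map fun j => ((uKt k n β q qi j ^ bexp j : (Ub k n β q qi)ˣ) :
            Ub k n β q qi)).prod)
          (Finsupp.single (([] : List (Fin n)), a, b, E) r) =
        Finsupp.single
          (([] : List (Fin n)), a, b + (l.map fun j => Pi.single j (bexp j)).sum, E) r := by
  intro l
  induction l with
  | nil => intro a b E r; simp
  | cons j l ih =>
      intro a b E r
      rw [List.map_cons, List.prod_cons, map_mul, Module.End.mul_apply, ih,
        repU_uKt_zpow k n β q qi hq]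
      congr 2
      simp only [List.map_cons, List.sum_cons]
      refine congrArg (fun x => (a, x, E)) ?_
      abel

lemma repU_Fprod (hq : q ≠ 0) :
    ∀ (F F' : List (Fin n)) (a b : Fin n → ℤ) (E : List (Fin n)) (r : k),
      repU k n β q qi hq ((F.map (fg k n β q qi)).prod)
          (Finsupp.single ((F' : List (Fin n)), a, b, E) r) =
        Finsupp.single ((F ++ F' : List (Fin n)), a, b, E) r := by
  intro F
  induction F with
  | nil => intro F' a b E r; simp
  | cons i F ih =>
      intro F' a b E r
      rw [List.map_cons, List.prod_cons, map_mul, Module.End.mul_apply, ih, repU_fg,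
        opF_single]
      rfl

lemma sE_zero (i : Fin n) : sE n β i 0 0 = 0 := by simp [sE]

lemma repU_Eprod (hq : q ≠ 0) :
    ∀ (E E' : List (Fin n)),
      repU k n β q qi hq ((E.map (eg k n β q qi)).prod)
          (Finsupp.single (([] : List (Fin n)), (0 : Fin n → ℤ), (0 : Fin n → ℤ), E') 1) =
        Finsupp.single (([] : List (Fin n)), (0 : Fin n → ℤ), (0 : Fin n → ℤ), E ++ E') 1 := by
  intro E
  induction E with
  | nil => intro E'; simp
  | cons i E ih =>
      intro E'
      rw [List.map_cons, List.prod_cons, map_mul, Module.End.mul_apply, ih, repU_eg,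
        opE_single]
      show (1 : k) • eFun k n β q qi i [] 0 0 (E ++ E') = _
      rw [one_smul, eFun, sE_zero, zpow_zero]
      rfl

lemma repU_mono (hq : q ≠ 0) (t : Idx n) :
    repU k n β q qi hq (mono k n β q qi t)
        (Finsupp.single ((([] : List (Fin n)), (0 : Fin n → ℤ), (0 : Fin n → ℤ),
          ([] : List (Fin n))) : Idx n) 1) =
      Finsupp.single t 1 := by
  obtain ⟨F, a, b, E⟩ := t
  rw [mono]
  simp only [map_mul, Module.End.mul_apply]
  rw [repU_Eprod k n β q qi hq, repU_Ktprod k n β q qi hq, repU_Kprod k n β q qi hq,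
    repU_Fprod k n β q qi hq]
  simp [sum_pi_single]

theorem mono_linearIndependent (hq : q ≠ 0) :
    LinearIndependent k (mono k n β q qi) := by
  classical
  let vac : V k n := Finsupp.single ((([] : List (Fin n)), (0 : Fin n → ℤ), (0 : Fin n → ℤ),
    ([] : List (Fin n))) : Idx n) 1
  let L : Ub k n β q qi →ₗ[k] V k n :=
    { toFun := fun x => repU k n β q qi hq x vac
      map_add' := by intro x y; simp
      map_smul' := by intro c x; simp }
  apply LinearIndependent.of_comp L
  have hcomp : ⇑L ∘ mono k n β q qi = fun t : Idx n => Finsupp.single t (1 : k) := by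
    funext t
    exact repU_mono k n β q qi hq t
  rw [hcomp, ← Finsupp.coe_basisSingleOne]
  exact Module.Basis.linearIndependent _

/-! ### Spanning -/

noncomputable def Fp (F : List (Fin n)) : Ub k n β q qi := (F.map (fg k n β q qi)).prod

noncomputable def Kp (a : Fin n → ℤ) : Ub k n β q qi :=
  ((List.finRange n).map fun i =>
    ((uK k n β q qi i ^ a i : (Ub k n β q qi)ˣ) : Ub k n β q qi)).prod

noncomputable def Ktp (b : Fin n → ℤ) : Ub k n β q qi :=
  ((List.finRange n).map fun i =>
    ((uKt k n β q qi i ^ b i : (Ub k n β q qi)ˣ) : Ub k n β q qi)).prod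

noncomputable def Ep (E : List (Fin n)) : Ub k n β q qi := (E.map (eg k n β q qi)).prod

lemma mono_eq (t : Idx n) : mono k n β q qi t =
    Fp k n β q qi t.1 * Kp k n β q qi t.2.1 * Ktp k n β q qi t.2.2.1 *
      Ep k n β q qi t.2.2.2 := rfl

lemma mkUb_rel {x y : FreeAlgebra k (Gen n)} (h : Rel k n β q qi x y) :
    mkUb k n β q qi x = mkUb k n β q qi y := RingQuot.mkAlgHom_rel k h

lemma ub_tor_comm (i j : Fin n) (t t' v v' : Bool) :
    mkUb k n β q qi (gg k (.tor i t v)) * mkUb k n β q qi (gg k (.tor j t' v')) =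
      mkUb k n β q qi (gg k (.tor j t' v')) * mkUb k n β q qi (gg k (.tor i t v)) := by
  have h := mkUb_rel k n β q qi (Rel.torComm i j t t' v v')
  simpa only [map_mul] using h

lemma ub_fK (i j : Fin n) : fg k n β q qi i * Kg k n β q qi j =
    q ^ (-β j i) • (Kg k n β q qi j * fg k n β q qi i) := by
  have h := mkUb_rel k n β q qi (Rel.fK i j)
  simp only [map_mul, map_smul] at h
  exact h

lemma ub_fKt (i j : Fin n) : fg k n β q qi i * Ktg k n β q qi j =
    q ^ (-β i j) • (Ktg k n β q qi j * fg k n β q qi i) := by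
  have h := mkUb_rel k n β q qi (Rel.fKt i j)
  simp only [map_mul, map_smul] at h
  exact h

lemma ub_eK (i j : Fin n) : eg k n β q qi i * Kg k n β q qi j =
    q ^ (β j i) • (Kg k n β q qi j * eg k n β q qi i) := by
  have h := mkUb_rel k n β q qi (Rel.eK i j)
  simp only [map_mul, map_smul] at h
  exact h

lemma ub_eKt (i j : Fin n) : eg k n β q qi i * Ktg k n β q qi j =
    q ^ (β i j) • (Ktg k n β q qi j * eg k n β q qi i) := by
  have h := mkUb_rel k n β q qi (Rel.eKt i j)
  simp only [map_mul, map_smul] at h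
  exact h

lemma ub_ef_ne (i j : Fin n) (h : i ≠ j) : eg k n β q qi i * fg k n β q qi j =
    fg k n β q qi j * eg k n β q qi i := by
  have h' := mkUb_rel k n β q qi (Rel.ef_ne i j h)
  simp only [map_mul] at h'
  exact h'

lemma ub_ef_eq (i : Fin n) : eg k n β q qi i * fg k n β q qi i =
    fg k n β q qi i * eg k n β q qi i +
      (qi i - (qi i)⁻¹)⁻¹ • (Kg k n β q qi i - Ktginv k n β q qi i) := by
  have h := mkUb_rel k n β q qi (Rel.ef_eq i)
  simp only [map_mul, map_sub, map_smul] at h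
  have h2 : eg k n β q qi i * fg k n β q qi i - fg k n β q qi i * eg k n β q qi i =
      (qi i - (qi i)⁻¹)⁻¹ • (Kg k n β q qi i - Ktginv k n β q qi i) := h
  linear_combination (norm := abel) h2

/-- From `x = c • y` with `c ≠ 0` conclude `y = c⁻¹ • x`. -/
lemma smul_flip {A : Type} [AddCommGroup A] [Module k A] {x y : A} {c : k} (hc : c ≠ 0)
    (h : x = c • y) : y = c⁻¹ • x := by
  rw [h, smul_smul, inv_mul_cancel₀ hc, one_smul]

lemma ub_Kf (hq : q ≠ 0) (i j : Fin n) : Kg k n β q qi j * fg k n β q qi i =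
    q ^ (β j i) • (fg k n β q qi i * Kg k n β q qi j) := by
  have h := smul_flip k (A := Ub k n β q qi) (zpow_ne_zero _ hq) (ub_fK k n β q qi i j)
  rw [← zpow_neg, neg_neg] at h
  exact h

lemma ub_Ktf (hq : q ≠ 0) (i j : Fin n) : Ktg k n β q qi j * fg k n β q qi i =
    q ^ (β i j) • (fg k n β q qi i * Ktg k n β q qi j) := by
  have h := smul_flip k (A := Ub k n β q qi) (zpow_ne_zero _ hq) (ub_fKt k n β q qi i j)
  rw [← zpow_neg, neg_neg] at h
  exact h

lemma push_inside {x y z : Ub k n β q qi} {c : k} (hxy : x * y = c • (y * x)) :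
    x * (y * z) = c • (y * (x * z)) := by
  rw [← mul_assoc, hxy, smul_mul_assoc, mul_assoc]

lemma push_inv (hq : q ≠ 0) {x : Ub k n β q qi} {w : (Ub k n β q qi)ˣ} {m : ℤ}
    (hx : x * ↑w = q ^ m • (↑w * x)) :
    x * ↑w⁻¹ = q ^ (-m) • (↑w⁻¹ * x) := by
  have h1 : (↑w⁻¹ : Ub k n β q qi) * x =
      q ^ m • (x * ↑w⁻¹) := by
    have : (↑w⁻¹ : Ub k n β q qi) * (x * ↑w) * ↑w⁻¹ = ↑w⁻¹ * x := by
      rw [← mul_assoc, mul_assoc _ (↑w : Ub k n β q qi) _, Units.mul_inv, mul_one]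
    rw [← this, hx]
    rw [mul_smul_comm, smul_mul_assoc]
    rw [← mul_assoc, Units.inv_mul, one_mul]
  have h2 := smul_flip k (A := Ub k n β q qi) (zpow_ne_zero m hq) h1
  rw [← zpow_neg] at h2
  exact h2

lemma push_zpow (hq : q ≠ 0) {x : Ub k n β q qi} {w : (Ub k n β q qi)ˣ} {m : ℤ}
    (hx : x * ↑w = q ^ m • (↑w * x)) (z : ℤ) :
    x * ↑(w ^ z) = q ^ (m * z) • (↑(w ^ z) * x) := by
  induction z using Int.induction_on with
  | zero => simp
  | succ s ih =>
      have : w ^ ((s : ℤ) + 1) = w ^ (s : ℤ) * w := by rw [zpow_add, zpow_one]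
      rw [this, Units.val_mul, ← mul_assoc, ih, smul_mul_assoc, mul_assoc, hx,
        mul_smul_comm, smul_smul, ← zpow_add₀ hq, ← mul_assoc]
      congr 2
      ring
  | pred s ih =>
      have : w ^ (-(s : ℤ) - 1) = w ^ (-(s : ℤ)) * w⁻¹ := by
        rw [← zpow_neg_one, ← zpow_add, sub_eq_add_neg]
      have hinv := push_inv k n β q qi hq hx
      rw [this, Units.val_mul, ← mul_assoc, ih, smul_mul_assoc, mul_assoc, hinv,
        mul_smul_comm, smul_smul, ← zpow_add₀ hq, ← mul_assoc]
      congr 2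
      ring

lemma gen_mul_Fprod (hq : q ≠ 0) (x : Ub k n β q qi) (m : Fin n → ℤ)
    (h : ∀ i, x * fg k n β q qi i = q ^ m i • (fg k n β q qi i * x)) :
    ∀ F : List (Fin n), x * Fp k n β q qi F =
      q ^ (F.map m).sum • (Fp k n β q qi F * x) := by
  intro F
  induction F with
  | nil => simp [Fp]
  | cons i F ih =>
      simp only [Fp, List.map_cons, List.prod_cons] at *
      rw [← mul_assoc, h i, smul_mul_assoc, mul_assoc, ih, mul_smul_comm, smul_smul,
        ← zpow_add₀ hq, List.sum_cons, ← mul_assoc]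

lemma gen_mul_Pprod (hq : q ≠ 0) (x : Ub k n β q qi) (w : Fin n → (Ub k n β q qi)ˣ)
    (m : Fin n → ℤ) (h : ∀ j, x * ↑(w j) = q ^ m j • (↑(w j) * x)) (c : Fin n → ℤ) :
    ∀ l : List (Fin n),
      x * (l.map fun j => ((w j ^ c j : (Ub k n β q qi)ˣ) : Ub k n β q qi)).prod =
        q ^ ((l.map fun j => m j * c j).sum) •
          ((l.map fun j => ((w j ^ c j : (Ub k n β q qi)ˣ) : Ub k n β q qi)).prod * x) := by
  intro l
  induction l with
  | nil => simp
  | cons j l ih =>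
      simp only [List.map_cons, List.prod_cons, List.sum_cons]
      rw [← mul_assoc, push_zpow k n β q qi hq (h j), smul_mul_assoc, mul_assoc, ih,
        mul_smul_comm, smul_smul, ← zpow_add₀ hq, ← mul_assoc]

lemma uK_comm (i i' : Fin n) : uK k n β q qi i * uK k n β q qi i' =
    uK k n β q qi i' * uK k n β q qi i := by
  apply Units.ext
  rw [Units.val_mul, Units.val_mul]
  exact ub_tor_comm k n β q qi i i' false false false false

lemma uKt_comm (i i' : Fin n) : uKt k n β q qi i * uKt k n β q qi i' =
    uKt k n β q qi i' * uKt k n β q qi i := by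
  apply Units.ext
  rw [Units.val_mul, Units.val_mul]
  exact ub_tor_comm k n β q qi i i' true true false false

lemma absorb (w : Fin n → (Ub k n β q qi)ˣ)
    (hcomm : ∀ i i', w i * w i' = w i' * w i) (j : Fin n) (z : ℤ) :
    ∀ l : List (Fin n), l.Nodup → j ∈ l → ∀ c : Fin n → ℤ,
      ((w j ^ z : (Ub k n β q qi)ˣ) : Ub k n β q qi) *
          (l.map fun i => ((w i ^ c i : (Ub k n β q qi)ˣ) : Ub k n β q qi)).prod =
        (l.map fun i =>
          ((w i ^ ((c + Pi.single j z : Fin n → ℤ) i) : (Ub k n β q qi)ˣ) : Ub k n β q qi)).prod := by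
  intro l
  induction l with
  | nil => intro _ hmem; exact absurd hmem List.not_mem_nil
  | cons i l ih =>
      intro hnd hmem c
      simp only [List.map_cons, List.prod_cons]
      by_cases hij : j = i
      · subst hij
        have hjl : j ∉ l := (List.nodup_cons.mp hnd).1
        have hmapeq : (l.map fun i =>
              ((w i ^ ((c + Pi.single j z : Fin n → ℤ) i) : (Ub k n β q qi)ˣ) : Ub k n β q qi)) =
            l.map fun i => ((w i ^ c i : (Ub k n β q qi)ˣ) : Ub k n β q qi) := by
          apply List.map_congr_left
          intro i hi
          have hne : i ≠ j := fun he => hjl (he ▸ hi)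
          rw [Pi.add_apply, Pi.single_eq_of_ne hne, add_zero]
        rw [hmapeq, ← mul_assoc, ← Units.val_mul, ← zpow_add]
        have : (c + Pi.single j z : Fin n → ℤ) j = z + c j := by
          rw [Pi.add_apply, Pi.single_eq_same, add_comm]
        rw [this]
      · have hmem' : j ∈ l := by
          rcases List.mem_cons.mp hmem with h | h
          · exact absurd h hij
          · exact h
        have hnd' : l.Nodup := (List.nodup_cons.mp hnd).2
        have hcom : Commute ((w j ^ z : (Ub k n β q qi)ˣ) : Ub k n β q qi)
            ((w i ^ c i : (Ub k n β q qi)ˣ) : Ub k n β q qi) := by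
          have h0 : Commute (w j) (w i) := hcomm j i
          exact (h0.zpow_zpow z (c i)).map (Units.coeHom (Ub k n β q qi))
        rw [← mul_assoc, hcom.eq, mul_assoc, ih hnd' hmem' c]
        have : (c + Pi.single j z : Fin n → ℤ) i = c i := by
          rw [Pi.add_apply, Pi.single_eq_of_ne (Ne.symm hij), add_zero]
        rw [this]

lemma sum_map_neg (f : Fin n → ℤ) : ∀ F : List (Fin n),
    (F.map fun i => -(f i)).sum = -((F.map f).sum) := by
  intro F
  induction F with
  | nil => simp
  | cons i F ih => simp [ih]; ring

lemma fg_mul_mono (i : Fin n) (t : Idx n) :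
    fg k n β q qi i * mono k n β q qi t = mono k n β q qi (i :: t.1, t.2) := by
  obtain ⟨F, a, b, E⟩ := t
  simp only [mono, List.map_cons, List.prod_cons, mul_assoc]

lemma Kg_one : Kg k n β q qi j = ((uK k n β q qi j ^ (1 : ℤ) : (Ub k n β q qi)ˣ) :
    Ub k n β q qi) := by rw [zpow_one]; rfl

lemma Kginv_one : Kginv k n β q qi j =
    ((uK k n β q qi j ^ (-1 : ℤ) : (Ub k n β q qi)ˣ) : Ub k n β q qi) := by
  rw [zpow_neg_one]; rfl

lemma Ktg_one : Ktg k n β q qi j = ((uKt k n β q qi j ^ (1 : ℤ) : (Ub k n β q qi)ˣ) :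
    Ub k n β q qi) := by rw [zpow_one]; rfl

lemma Ktginv_one : Ktginv k n β q qi j =
    ((uKt k n β q qi j ^ (-1 : ℤ) : (Ub k n β q qi)ˣ) : Ub k n β q qi) := by
  rw [zpow_neg_one]; rfl

lemma Kg_mul_mono (hq : q ≠ 0) (j : Fin n) (t : Idx n) :
    Kg k n β q qi j * mono k n β q qi t =
      q ^ sK n β j t.1 •
        mono k n β q qi (t.1, t.2.1 + Pi.single j 1, t.2.2.1, t.2.2.2) := by
  obtain ⟨F, a, b, E⟩ := t
  have hF := gen_mul_Fprod k n β q qi hq (Kg k n β q qi j) (fun i => β j i)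
    (fun i => ub_Kf k n β q qi hq i j) F
  have habs := absorb k n β q qi (uK k n β q qi) (uK_comm k n β q qi) j 1
    (List.finRange n) (List.nodup_finRange n) (List.mem_finRange j) a
  simp only [Fp] at hF
  simp only [mono, mul_assoc]
  rw [push_inside k n β q qi hF]
  rw [← mul_assoc (Kg k n β q qi j), Kg_one k n β q qi, habs]
  rfl

lemma Kginv_mul_mono (hq : q ≠ 0) (j : Fin n) (t : Idx n) :
    Kginv k n β q qi j * mono k n β q qi t =
      q ^ (- sK n β j t.1) •
        mono k n β q qi (t.1, t.2.1 + Pi.single j (-1), t.2.2.1, t.2.2.2) := by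
  obtain ⟨F, a, b, E⟩ := t
  have hKinvf : ∀ i, Kginv k n β q qi j * fg k n β q qi i =
      q ^ (-β j i) • (fg k n β q qi i * Kginv k n β q qi j) := by
    intro i
    have h1 := push_inv k n β q qi hq (x := fg k n β q qi i) (w := uK k n β q qi j)
      (m := -β j i) (ub_fK k n β q qi i j)
    rw [neg_neg] at h1
    have h2 := smul_flip k (A := Ub k n β q qi) (zpow_ne_zero _ hq) h1
    rw [← zpow_neg] at h2
    exact h2
  have hF := gen_mul_Fprod k n β q qi hq (Kginv k n β q qi j) (fun i => -β j i)
    hKinvf F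
  have habs := absorb k n β q qi (uK k n β q qi) (uK_comm k n β q qi) j (-1)
    (List.finRange n) (List.nodup_finRange n) (List.mem_finRange j) a
  simp only [Fp] at hF
  simp only [mono, mul_assoc]
  rw [push_inside k n β q qi hF]
  rw [← mul_assoc (Kginv k n β q qi j), Kginv_one k n β q qi, habs, sum_map_neg]
  rfl

lemma comm_inside {x y z : Ub k n β q qi} (hxy : x * y = y * x) :
    x * (y * z) = y * (x * z) := by rw [← mul_assoc, hxy, mul_assoc]

lemma sum_map_zero (c : Fin n → ℤ) (l : List (Fin n)) :
    (l.map fun i => (0 : ℤ) * c i).sum = 0 := by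
  induction l with
  | nil => simp
  | cons i l ih => simp [ih]

lemma Ktg_comm_uK (j j' : Fin n) :
    Ktg k n β q qi j * ((uK k n β q qi j' : (Ub k n β q qi)ˣ) : Ub k n β q qi) =
      ((uK k n β q qi j' : (Ub k n β q qi)ˣ) : Ub k n β q qi) * Ktg k n β q qi j :=
  ub_tor_comm k n β q qi j j' true false false false

lemma Ktginv_comm_uK (j j' : Fin n) :
    Ktginv k n β q qi j * ((uK k n β q qi j' : (Ub k n β q qi)ˣ) : Ub k n β q qi) =
      ((uK k n β q qi j' : (Ub k n β q qi)ˣ) : Ub k n β q qi) * Ktginv k n β q qi j :=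
  ub_tor_comm k n β q qi j j' true false true false

lemma x_comm_Kp (x : Ub k n β q qi) (hq : q ≠ 0)
    (h : ∀ j', x * ((uK k n β q qi j' : (Ub k n β q qi)ˣ) : Ub k n β q qi) =
      ((uK k n β q qi j' : (Ub k n β q qi)ˣ) : Ub k n β q qi) * x) (a : Fin n → ℤ) :
    x * ((List.finRange n).map fun i =>
        ((uK k n β q qi i ^ a i : (Ub k n β q qi)ˣ) : Ub k n β q qi)).prod =
      ((List.finRange n).map fun i =>
        ((uK k n β q qi i ^ a i : (Ub k n β q qi)ˣ) : Ub k n β q qi)).prod * x := by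
  have hP := gen_mul_Pprod k n β q qi hq x (uK k n β q qi) (fun _ => 0)
    (fun j' => by rw [zpow_zero, one_smul]; exact h j') a (List.finRange n)
  rw [sum_map_zero, zpow_zero, one_smul] at hP
  exact hP

lemma Ktg_mul_mono (hq : q ≠ 0) (j : Fin n) (t : Idx n) :
    Ktg k n β q qi j * mono k n β q qi t =
      q ^ sKt n β j t.1 •
        mono k n β q qi (t.1, t.2.1, t.2.2.1 + Pi.single j 1, t.2.2.2) := by
  obtain ⟨F, a, b, E⟩ := t
  have hF := gen_mul_Fprod k n β q qi hq (Ktg k n β q qi j) (fun i => β i j)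
    (fun i => ub_Ktf k n β q qi hq i j) F
  simp only [Fp] at hF
  have hP := x_comm_Kp k n β q qi (Ktg k n β q qi j) hq (Ktg_comm_uK k n β q qi j) a
  have habs := absorb k n β q qi (uKt k n β q qi) (uKt_comm k n β q qi) j 1
    (List.finRange n) (List.nodup_finRange n) (List.mem_finRange j) b
  simp only [mono, mul_assoc]
  rw [push_inside k n β q qi hF, comm_inside k n β q qi hP,
    ← mul_assoc (Ktg k n β q qi j), Ktg_one k n β q qi, habs]
  rfl

lemma Ktginv_mul_mono (hq : q ≠ 0) (j : Fin n) (t : Idx n) :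
    Ktginv k n β q qi j * mono k n β q qi t =
      q ^ (- sKt n β j t.1) •
        mono k n β q qi (t.1, t.2.1, t.2.2.1 + Pi.single j (-1), t.2.2.2) := by
  obtain ⟨F, a, b, E⟩ := t
  have hKtinvf : ∀ i, Ktginv k n β q qi j * fg k n β q qi i =
      q ^ (-β i j) • (fg k n β q qi i * Ktginv k n β q qi j) := by
    intro i
    have h1 := push_inv k n β q qi hq (x := fg k n β q qi i) (w := uKt k n β q qi j)
      (m := -β i j) (ub_fKt k n β q qi i j)
    rw [neg_neg] at h1
    have h2 := smul_flip k (A := Ub k n β q qi) (zpow_ne_zero _ hq) h1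
    rw [← zpow_neg] at h2
    exact h2
  have hF := gen_mul_Fprod k n β q qi hq (Ktginv k n β q qi j) (fun i => -β i j)
    hKtinvf F
  simp only [Fp] at hF
  have hP := x_comm_Kp k n β q qi (Ktginv k n β q qi j) hq
    (Ktginv_comm_uK k n β q qi j) a
  have habs := absorb k n β q qi (uKt k n β q qi) (uKt_comm k n β q qi) j (-1)
    (List.finRange n) (List.nodup_finRange n) (List.mem_finRange j) b
  simp only [mono, mul_assoc]
  rw [push_inside k n β q qi hF, comm_inside k n β q qi hP,
    ← mul_assoc (Ktginv k n β q qi j), Ktginv_one k n β q qi, habs, sum_map_neg]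
  rfl

lemma eg_mul_mono_nil (hq : q ≠ 0) (i : Fin n) (a b : Fin n → ℤ) (E : List (Fin n)) :
    eg k n β q qi i * mono k n β q qi (([] : List (Fin n)), a, b, E) =
      (q ^ ((List.finRange n).map fun j => β j i * a j).sum *
        q ^ ((List.finRange n).map fun j => β i j * b j).sum) •
        mono k n β q qi (([] : List (Fin n)), a, b, i :: E) := by
  have hP1 := gen_mul_Pprod k n β q qi hq (eg k n β q qi i) (uK k n β q qi)
    (fun j => β j i) (fun j => ub_eK k n β q qi i j) a (List.finRange n)
  have hP2 := gen_mul_Pprod k n β q qi hq (eg k n β q qi i) (uKt k n β q qi)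
    (fun j => β i j) (fun j => ub_eKt k n β q qi i j) b (List.finRange n)
  have hE : eg k n β q qi i * (E.map (eg k n β q qi)).prod =
      ((i :: E).map (eg k n β q qi)).prod := by
    rw [List.map_cons, List.prod_cons]
  simp only [mono, List.map_nil, List.prod_nil, one_mul, mul_assoc]
  rw [push_inside k n β q qi hP1, push_inside k n β q qi hP2, hE,
    mul_smul_comm, smul_smul]

noncomputable def Sp : Submodule k (Ub k n β q qi) :=
  Submodule.span k (Set.range (mono k n β q qi))

lemma mono_mem (t : Idx n) : mono k n β q qi t ∈ Sp k n β q qi :=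
  Submodule.subset_span ⟨t, rfl⟩

lemma stab (x : Ub k n β q qi) (h : ∀ t, x * mono k n β q qi t ∈ Sp k n β q qi) :
    ∀ v ∈ Sp k n β q qi, x * v ∈ Sp k n β q qi := by
  intro v hv
  induction hv using Submodule.span_induction with
  | mem y hy => obtain ⟨t, rfl⟩ := hy; exact h t
  | zero => rw [mul_zero]; exact Submodule.zero_mem _
  | add y z _ _ hy hz => rw [mul_add]; exact Submodule.add_mem _ hy hz
  | smul c y _ hy => rw [mul_smul_comm]; exact Submodule.smul_mem _ c hy

lemma fg_mul_mem (i : Fin n) (t : Idx n) :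
    fg k n β q qi i * mono k n β q qi t ∈ Sp k n β q qi := by
  rw [fg_mul_mono]; exact mono_mem k n β q qi _

lemma Kg_mul_mem (hq : q ≠ 0) (j : Fin n) (t : Idx n) :
    Kg k n β q qi j * mono k n β q qi t ∈ Sp k n β q qi := by
  rw [Kg_mul_mono k n β q qi hq]
  exact Submodule.smul_mem _ _ (mono_mem k n β q qi _)

lemma Kginv_mul_mem (hq : q ≠ 0) (j : Fin n) (t : Idx n) :
    Kginv k n β q qi j * mono k n β q qi t ∈ Sp k n β q qi := by
  rw [Kginv_mul_mono k n β q qi hq]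
  exact Submodule.smul_mem _ _ (mono_mem k n β q qi _)

lemma Ktg_mul_mem (hq : q ≠ 0) (j : Fin n) (t : Idx n) :
    Ktg k n β q qi j * mono k n β q qi t ∈ Sp k n β q qi := by
  rw [Ktg_mul_mono k n β q qi hq]
  exact Submodule.smul_mem _ _ (mono_mem k n β q qi _)

lemma Ktginv_mul_mem (hq : q ≠ 0) (j : Fin n) (t : Idx n) :
    Ktginv k n β q qi j * mono k n β q qi t ∈ Sp k n β q qi := by
  rw [Ktginv_mul_mono k n β q qi hq]
  exact Submodule.smul_mem _ _ (mono_mem k n β q qi _)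

lemma eg_mul_mem (hq : q ≠ 0) (i : Fin n) :
    ∀ (F : List (Fin n)) (a b : Fin n → ℤ) (E : List (Fin n)),
      eg k n β q qi i * mono k n β q qi (F, a, b, E) ∈ Sp k n β q qi := by
  intro F
  induction F with
  | nil =>
      intro a b E
      rw [eg_mul_mono_nil k n β q qi hq]
      exact Submodule.smul_mem _ _ (mono_mem k n β q qi _)
  | cons m F ih =>
      intro a b E
      have hm : mono k n β q qi (m :: F, a, b, E) =
          fg k n β q qi m * mono k n β q qi (F, a, b, E) :=
        (fg_mul_mono k n β q qi m (F, a, b, E)).symm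
      rw [hm, ← mul_assoc]
      by_cases him : i = m
      · subst him
        rw [ub_ef_eq k n β q qi i, add_mul, mul_assoc]
        apply Submodule.add_mem
        · exact stab k n β q qi _ (fg_mul_mem k n β q qi i) _ (ih a b E)
        · rw [smul_mul_assoc, sub_mul]
          apply Submodule.smul_mem
          exact Submodule.sub_mem _ (Kg_mul_mem k n β q qi hq i _)
            (Ktginv_mul_mem k n β q qi hq i _)
      · rw [ub_ef_ne k n β q qi i m him, mul_assoc]
        exact stab k n β q qi _ (fg_mul_mem k n β q qi m) _ (ih a b E)

lemma gen_mul_mem (hq : q ≠ 0) (g : Gen n) (t : Idx n) :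
    mkUb k n β q qi (gg k g) * mono k n β q qi t ∈ Sp k n β q qi := by
  cases g with
  | tor j tt vv =>
      cases tt <;> cases vv
      · exact Kg_mul_mem k n β q qi hq j t
      · exact Kginv_mul_mem k n β q qi hq j t
      · exact Ktg_mul_mem k n β q qi hq j t
      · exact Ktginv_mul_mem k n β q qi hq j t
  | e i => obtain ⟨F, a, b, E⟩ := t; exact eg_mul_mem k n β q qi hq i F a b E
  | f i => exact fg_mul_mem k n β q qi i t

lemma mono_triv : mono k n β q qi ((([] : List (Fin n)), (0 : Fin n → ℤ),
    (0 : Fin n → ℤ), ([] : List (Fin n))) : Idx n) = 1 := by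
  have hK : ((List.finRange n).map fun i =>
      ((uK k n β q qi i ^ ((0 : Fin n → ℤ) i) : (Ub k n β q qi)ˣ) :
        Ub k n β q qi)).prod = 1 := by
    apply List.prod_eq_one
    intro x hx
    obtain ⟨i, _, rfl⟩ := List.mem_map.mp hx
    simp
  have hKt : ((List.finRange n).map fun i =>
      ((uKt k n β q qi i ^ ((0 : Fin n → ℤ) i) : (Ub k n β q qi)ˣ) :
        Ub k n β q qi)).prod = 1 := by
    apply List.prod_eq_one
    intro x hx
    obtain ⟨i, _, rfl⟩ := List.mem_map.mp hx
    simp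
  simp only [mono, List.map_nil, List.prod_nil, one_mul, hK, hKt, mul_one]

theorem mono_span (hq : q ≠ 0) :
    Submodule.span k (Set.range (mono k n β q qi)) = ⊤ := by
  have hstab : ∀ g : Gen n, ∀ v ∈ Sp k n β q qi,
      mkUb k n β q qi (gg k g) * v ∈ Sp k n β q qi :=
    fun g => stab k n β q qi _ (gen_mul_mem k n β q qi hq g)
  let A : Subalgebra k (Ub k n β q qi) :=
    { carrier := {x | ∀ v ∈ Sp k n β q qi, x * v ∈ Sp k n β q qi}
      mul_mem' := fun {x y} hx hy v hv => by
        rw [mul_assoc]; exact hx _ (hy _ hv)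
      one_mem' := fun v hv => by rw [one_mul]; exact hv
      add_mem' := fun {x y} hx hy v hv => by
        rw [add_mul]; exact Submodule.add_mem _ (hx _ hv) (hy _ hv)
      algebraMap_mem' := fun c v hv => by
        rw [← Algebra.smul_def]; exact Submodule.smul_mem _ _ hv }
  have htop : Algebra.adjoin k
      (⇑(mkUb k n β q qi) '' Set.range (FreeAlgebra.ι k (X := Gen n))) = ⊤ := by
    rw [← AlgHom.map_adjoin, FreeAlgebra.adjoin_range_ι, Algebra.map_top]
    rw [eq_top_iff]
    intro x _
    obtain ⟨y, hy⟩ := RingQuot.mkAlgHom_surjective k (Rel k n β q qi) x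
    exact (AlgHom.mem_range _).mpr ⟨y, hy⟩
  have hle : Algebra.adjoin k
      (⇑(mkUb k n β q qi) '' Set.range (FreeAlgebra.ι k (X := Gen n))) ≤ A := by
    apply Algebra.adjoin_le
    rintro _ ⟨_, ⟨g, rfl⟩, rfl⟩
    exact hstab g
  have hA : ∀ x : Ub k n β q qi, ∀ v ∈ Sp k n β q qi, x * v ∈ Sp k n β q qi := by
    intro x
    have hx : x ∈ A := hle (htop ▸ Algebra.mem_top)
    exact hx
  rw [eq_top_iff]
  intro x _
  have h1 : (1 : Ub k n β q qi) ∈ Sp k n β q qi := by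
    rw [← mono_triv k n β q qi]
    exact mono_mem k n β q qi _
  have := hA x 1 h1
  rw [mul_one] at this
  exact this


/-- triangular decomposition of `U(β)` — the monomials
`f_{i₁}⋯f_{i_r} · K₁^{a₁}⋯K_n^{a_n} K̃₁^{b₁}⋯K̃_n^{b_n} · e_{j₁}⋯e_{j_s}`,
indexed by words in the `f`'s, integer exponent vectors for the toral part, and
words in the `e`'s, form a basis of `U(β)` as a `k`-vector space. -/
theorem triangular_decomposition (k : Type) [Field k] (n : ℕ)
    (β : Matrix (Fin n) (Fin n) ℤ) (q : k) (qi : Fin n → k)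
    (hq : q ≠ 0) (hqi : ∀ i, qi i ≠ 0) (hqi' : ∀ i, qi i - (qi i)⁻¹ ≠ 0) :
    LinearIndependent k (mono k n β q qi) ∧
      Submodule.span k (Set.range (mono k n β q qi)) = ⊤ :=
  ⟨mono_linearIndependent k n β q qi hq, mono_span k n β q qi hq⟩

end FreeDoubleBos
end
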